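/- Let 𝒯 be a laminar family of subsets of a finite set N containing all singletons. Then the set of vectors {±𝟙_T : T ∈ 𝒯} ⊆ ℤ^N is unimodular: for every subset B of these vectors, the subgroup of ℤ^N generated by B is pure. -/

import Mathlib

/-!
Purity of a subgroup `H ≤ ℤ^N` is saturation (`n • x ∈ H → n = 0 ∨ x ∈ H`), i.e. torsion-freeness
of `ℤ^N ⧸ H`, and any subset of `{±𝟙_T}` generates the same group as the indicators of a laminar
subfamily. For a finite laminar family, take an inclusion-minimal nonempty member `T₀` and `i ∈ T₀`:
every member contains `T₀` or misses it, so the endomorphism `z ↦ z - z i • 𝟙_{T₀}` sends each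
`𝟙_T` to `𝟙_{T \ T₀}`. It therefore maps the group into the group of the smaller laminar family
`{T \ T₀ : T ≠ T₀}`, which lies inside the original group, and it only changes `z` by a multiple
of `𝟙_{T₀}`. Saturation of the smaller group thus lifts, and induction on the size of the family
finishes the proof.
-/

/-- A set of integer vectors is unimodular if every subset generates a pure subgroup. -/
def Unimodular {N : Type*} [Fintype N] (R : Set (N → ℤ)) : Prop :=
  ∀ B ⊆ R, ∀ g : (N → ℤ) ⧸ AddSubgroup.closure B, g ≠ 0 → ¬IsOfFinAddOrder g

open Set

namespace QuotientAddGroup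

theorem isAddTorsionFree_of_nsmulSaturated {G : Type*} [AddCommGroup G] {H : AddSubgroup G}
    (hH : H.NSMulSaturated) : IsAddTorsionFree (G ⧸ H) := by
  refine ⟨fun n hn a b hab ↦ ?_⟩
  obtain ⟨a, rfl⟩ := QuotientAddGroup.mk_surjective a
  obtain ⟨b, rfl⟩ := QuotientAddGroup.mk_surjective b
  simp only [← QuotientAddGroup.mk_nsmul, QuotientAddGroup.eq] at hab ⊢
  exact (hH (by simpa [nsmul_add] using hab)).resolve_left hn

end QuotientAddGroup

namespace AddSubgroup

variable {G : Type*} [AddGroup G]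

theorem closure_le_of_subset_union_neg {s t : Set G} (h : s ⊆ t ∪ -t) : closure s ≤ closure t :=
  (closure_le _).2 fun x hx ↦ (h hx).elim (fun hx ↦ subset_closure hx)
    fun hx ↦ by simpa using neg_mem (subset_closure hx : -x ∈ closure t)

theorem nsmulSaturated_of_le_comap {H K : AddSubgroup G} (f : G →+ G) (hK : K.NSMulSaturated)
    (hHK : H ≤ K.comap f) (hKH : K ≤ H) (hf : ∀ x, x - f x ∈ H) : H.NSMulSaturated := by
  intro n x hnx
  refine (hK (by simpa [map_nsmul] using hHK hnx)).imp_right fun hfx ↦ ?_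
  simpa using add_mem (hf x) (hKH hfx)

end AddSubgroup

local notation "𝟙[" T "]" => Set.indicator T fun _ ↦ (1 : ℤ)

section Laminar

variable {N : Type*}

def IsLaminar (S : Set (Set N)) : Prop :=
  ∀ A ∈ S, ∀ B ∈ S, A ⊆ B ∨ B ⊆ A ∨ A ∩ B = ∅

namespace IsLaminar

variable {S : Set (Set N)}

theorem mono {S' : Set (Set N)} (h : IsLaminar S) (hS' : S' ⊆ S) : IsLaminar S' :=
  fun A hA B hB ↦ h A (hS' hA) B (hS' hB)

theorem image_sdiff (h : IsLaminar S) (T₀ : Set N) : IsLaminar ((· \ T₀) '' S) := by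
  rintro _ ⟨A, hA, rfl⟩ _ ⟨B, hB, rfl⟩
  refine (h A hA B hB).imp (sdiff_subset_sdiff_left ·) (Or.imp (sdiff_subset_sdiff_left ·) ?_)
  intro hAB
  exact subset_empty_iff.1 (hAB ▸ inter_subset_inter sdiff_subset sdiff_subset)

/-- Witnessed by an inclusion-minimal nonempty member. -/
theorem exists_subset_or_disjoint (h : IsLaminar S) (hS : S.Finite) (hne : ∃ T ∈ S, T.Nonempty) :
    ∃ T₀ ∈ S, T₀.Nonempty ∧ ∀ T ∈ S, T₀ ⊆ T ∨ Disjoint T₀ T := by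
  obtain ⟨T₀, ⟨hT₀S, hT₀ne⟩, hmin⟩ := (hS.sep Set.Nonempty).exists_minimal hne
  refine ⟨T₀, hT₀S, hT₀ne, fun T hT ↦ ?_⟩
  rcases h T₀ hT₀S T hT with hsub | hsub | hdisj
  · exact .inl hsub
  · rcases T.eq_empty_or_nonempty with rfl | hTne
    · exact .inr (disjoint_empty _)
    · exact .inl (hmin ⟨hT, hTne⟩ hsub)
  · exact .inr (disjoint_iff_inter_eq_empty.2 hdisj)

end IsLaminar

theorem indicator_sub_apply_smul_indicator {T₀ T : Set N} {i : N} (hi : i ∈ T₀)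
    (h : T₀ ⊆ T ∨ Disjoint T₀ T) :
    𝟙[T] - 𝟙[T] i • 𝟙[T₀] = 𝟙[T \ T₀] := by
  rcases h with hsub | hdisj
  · simp [indicator_of_mem (hsub hi), indicator_sdiff hsub]
  · simp [indicator_of_notMem (hdisj.notMem_of_mem_left hi), hdisj.symm.sdiff_eq_left]

theorem nsmulSaturated_closure_indicator_of_pivot {S : Set (Set N)} {T₀ : Set N} {i : N}
    (hT₀ : T₀ ∈ S) (hi : i ∈ T₀) (hpiv : ∀ T ∈ S, T₀ ⊆ T ∨ Disjoint T₀ T)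
    (hS' : (AddSubgroup.closure ((fun T ↦ 𝟙[T]) '' ((· \ T₀) '' (S \ {T₀})))).NSMulSaturated) :
    (AddSubgroup.closure ((fun T ↦ 𝟙[T]) '' S)).NSMulSaturated := by
  set H := AddSubgroup.closure ((fun T ↦ 𝟙[T]) '' S)
  have hmem {T : Set N} (hT : T ∈ S) : 𝟙[T] ∈ H := AddSubgroup.subset_closure ⟨T, hT, rfl⟩
  let f : (N → ℤ) →ₗ[ℤ] N → ℤ := LinearMap.id - (LinearMap.proj i).smulRight 𝟙[T₀]
  have hf (z : N → ℤ) : f z = z - z i • 𝟙[T₀] := rfl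
  refine AddSubgroup.nsmulSaturated_of_le_comap f.toAddMonoidHom hS' ?_ ?_ fun x ↦ ?_
  · refine (AddSubgroup.closure_le _).2 ?_
    rintro _ ⟨T, hT, rfl⟩
    change f 𝟙[T] ∈ AddSubgroup.closure _
    rw [hf, indicator_sub_apply_smul_indicator hi (hpiv T hT)]
    obtain rfl | hne := eq_or_ne T T₀
    · rw [sdiff_self, indicator_empty']
      exact zero_mem _
    · exact AddSubgroup.subset_closure ⟨_, ⟨T, ⟨hT, hne⟩, rfl⟩, rfl⟩
  · refine (AddSubgroup.closure_le _).2 ?_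
    rintro _ ⟨_, ⟨T, hT, rfl⟩, rfl⟩
    change 𝟙[T \ T₀] ∈ H
    rw [← indicator_sub_apply_smul_indicator hi (hpiv T hT.1)]
    exact sub_mem (hmem hT.1) (AddSubgroup.zsmul_mem _ (hmem hT₀) _)
  · simpa [hf] using AddSubgroup.zsmul_mem _ (hmem hT₀) (x i)

theorem IsLaminar.nsmulSaturated_closure_indicator {S : Set (Set N)} (hlam : IsLaminar S)
    (hS : S.Finite) : (AddSubgroup.closure ((fun T ↦ 𝟙[T]) '' S)).NSMulSaturated := by
  induction hn : S.ncard using Nat.strong_induction_on generalizing S with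
  | _ n ih =>
    by_cases hne : ∃ T ∈ S, T.Nonempty
    · obtain ⟨T₀, hT₀, ⟨i, hi⟩, hpiv⟩ := hlam.exists_subset_or_disjoint hS hne
      refine nsmulSaturated_closure_indicator_of_pivot hT₀ hi hpiv (ih _ ?_
        ((hlam.mono sdiff_subset).image_sdiff T₀) ((hS.sdiff).image _) rfl)
      calc ((· \ T₀) '' (S \ {T₀})).ncard ≤ (S \ {T₀}).ncard := ncard_image_le (hS.sdiff)
        _ < n := hn ▸ ncard_sdiff_singleton_lt_of_mem hT₀ hS
    · have hbot : AddSubgroup.closure ((fun T ↦ 𝟙[T]) '' S) = ⊥ := by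
        refine eq_bot_iff.2 ((AddSubgroup.closure_le _).2 ?_)
        rintro _ ⟨T, hT, rfl⟩
        change 𝟙[T] ∈ (⊥ : AddSubgroup (N → ℤ))
        rw [not_nonempty_iff_eq_empty.1 fun h ↦ hne ⟨T, hT, h⟩, indicator_empty']
        exact zero_mem _
      intro n x hx
      rw [hbot] at hx ⊢
      exact smul_eq_zero.1 (AddSubgroup.mem_bot.1 hx)

end Laminar

theorem laminar_indicators_unimodular_general
    (N : Type*) [Fintype N]
    (𝒯 : Set (Set N))
    (hlam : ∀ A ∈ 𝒯, ∀ B ∈ 𝒯, A ⊆ B ∨ B ⊆ A ∨ A ∩ B = ∅) :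
    Unimodular {v : N → ℤ | ∃ T ∈ 𝒯,
      v = T.indicator (fun _ => (1 : ℤ)) ∨ v = -T.indicator (fun _ => (1 : ℤ))} := by
  intro B hB
  let S := {T ∈ 𝒯 | 𝟙[T] ∈ B ∨ -𝟙[T] ∈ B}
  have hBS : AddSubgroup.closure B = AddSubgroup.closure ((fun T ↦ 𝟙[T]) '' S) := by
    refine le_antisymm (AddSubgroup.closure_le_of_subset_union_neg fun b hb ↦ ?_)
      (AddSubgroup.closure_le_of_subset_union_neg ?_)
    · obtain ⟨T, hT, rfl | rfl⟩ := hB hb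
      · exact .inl ⟨T, ⟨hT, .inl hb⟩, rfl⟩
      · exact .inr ⟨T, ⟨hT, .inr hb⟩, (neg_neg _).symm⟩
    · rintro _ ⟨T, ⟨-, hTB⟩, rfl⟩
      exact hTB
  have hsat := (IsLaminar.mono hlam (sep_subset 𝒯 _)).nsmulSaturated_closure_indicator (toFinite S)
  rw [← hBS] at hsat
  exact isAddTorsionFree_iff_not_isOfFinAddOrder.1
    (QuotientAddGroup.isAddTorsionFree_of_nsmulSaturated hsat)

theorem laminar_indicators_unimodular
    (N : Type*) [Fintype N]
    (𝒯 : Set (Set N))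
    (hlam : ∀ A ∈ 𝒯, ∀ B ∈ 𝒯, A ⊆ B ∨ B ⊆ A ∨ A ∩ B = ∅)
    (hsing : ∀ i : N, {i} ∈ 𝒯) :
    Unimodular {v : N → ℤ | ∃ T ∈ 𝒯,
      v = T.indicator (fun _ => (1 : ℤ)) ∨ v = -T.indicator (fun _ => (1 : ℤ))} :=
  laminar_indicators_unimodular_general N 𝒯 hlam
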